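/- Assume Criterion 1 holds. Consider the block partition of the CPF sparsity pattern S_CPF into S_A (the time-t rows listed as: time-t magnitude rows, time-t reactive- and active-power rows for C ∪ M, and the coupled active-power rows for O, restricted to the time-t columns), S_B (the same rows restricted to the time-t′ columns), S_C (the remaining rows — the coupled reactive-power rows for O and all time-t′ rows — restricted to the time-t columns), and S_D (those remaining rows restricted to the time-t′ columns). Then there exist real matrices A, B, C, D conforming respectively to S_A, S_B, S_C, S_D such that A is invertible and the Schur complement D − C·A⁻¹·B is invertible. -/

import Mathlib

/-!
Criterion 1 yields a matching of rows and columns of `S_A` inside the pattern. Shifting each vertex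
off `O` one step back along its path (and fixing the vertices off all paths) maps the buses off `O`
bijectively onto those off `M`: it is injective since the paths are disjoint, and onto because
`|O| = |M|`. So every bus `n ∈ C ∪ M` can give its active-power row the column `i_m` of a bus
`m ∈ C ∪ O` equal or adjacent to `n`, while magnitude, reactive-power and coupled rows take their
own diagonal columns. The permutation matrix of this matching conforms to `S_A`; as the rows of
`S_D` are those of `S_A` reordered, the same matching serves for `D`, and with `B = C = 0` the
Schur complement is `D` itself.
-/

open Matrix

/-- The adjacency-plus-diagonal pattern of the grid: `(n, m) ∈ P` iff `n = m`
or `{n, m}` is an edge of the tree `T`. -/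
def BusP {N : ℕ} (T : SimpleGraph (Fin (N + 1))) (n m : Fin (N + 1)) : Prop :=
  n = m ∨ T.Adj n m

/-- Column indices of the (single-time) Jacobian pattern: `Sum.inl n` is the
column `r_n` (real voltage part of bus `n`, `n ∈ {0, …, N}`), and `Sum.inr j`
is the column `i_{j+1}` (imaginary voltage part of bus `j+1`; `i_0` is omitted
since the substation angle is fixed). -/
abbrev JCol (N : ℕ) := Fin (N + 1) ⊕ Fin N

/-- The bus a column refers to. -/
def colBus {N : ℕ} : JCol N → Fin (N + 1)
  | Sum.inl n => n
  | Sum.inr j => j.succ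

/-- A magnitude row for bus `n` may be nonzero only in columns `r_n` and
(if `n ≠ 0`) `i_n`. -/
def AllowedMag {N : ℕ} (n : Fin (N + 1)) (c : JCol N) : Prop :=
  colBus c = n

/-- A power row for bus `n` may be nonzero only in the columns `r_m`, `i_m`
over all `m` with `(n, m) ∈ P`. -/
def AllowedPow {N : ℕ} (T : SimpleGraph (Fin (N + 1))) (n : Fin (N + 1))
    (c : JCol N) : Prop :=
  BusP T n (colBus c)

/-- Row indices of the pattern `S_A`: one magnitude row for each
`n ∈ {0} ∪ M`, one reactive-power row and one active-power row for each
`n ∈ C ∪ M`, and one (coupled) active-power row for each `n ∈ O`. -/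
abbrev RowA {N : ℕ} (M O C : Finset (Fin (N + 1))) :=
  ({x // x ∈ insert (0 : Fin (N + 1)) M}) ⊕
    (({x // x ∈ C ∪ M}) ⊕ (({x // x ∈ C ∪ M}) ⊕ ({x // x ∈ O})))

/-- The sparsity pattern `S_A` of the partial Jacobian `J_A`, as the predicate
telling which entries are allowed to be nonzero. -/
def AllowedA {N : ℕ} (T : SimpleGraph (Fin (N + 1))) (M O C : Finset (Fin (N + 1))) :
    RowA M O C → JCol N → Prop
  | Sum.inl n => AllowedMag n.val
  | Sum.inr (Sum.inl n) => AllowedPow T n.val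
  | Sum.inr (Sum.inr (Sum.inl n)) => AllowedPow T n.val
  | Sum.inr (Sum.inr (Sum.inr n)) => AllowedPow T n.val

/-- **Criterion 1** of the paper: there exists a family of pairwise
vertex-disjoint paths of the tree induced by `T` on `{1, …, N}` (i.e., paths
of `T` avoiding the substation `0`), one path for each node of `O`, each
starting at that node of `O` and ending at a node of `M`. -/
def Criterion1 {N : ℕ} (T : SimpleGraph (Fin (N + 1))) (M O : Finset (Fin (N + 1))) : Prop :=
  ∃ P : Fin (N + 1) → List (Fin (N + 1)),
    (∀ o ∈ O, (P o).Nodup ∧ (P o).Chain' T.Adj ∧ (0 : Fin (N + 1)) ∉ P o ∧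
      (P o).head? = some o ∧ ∃ mEnd ∈ M, (P o).getLast? = some mEnd) ∧
    ∀ o ∈ O, ∀ o' ∈ O, o ≠ o' → ∀ v ∈ P o, v ∉ P o'

/-- Row indices of the remaining (bottom) block of the CPF Jacobian pattern:
one coupled reactive-power row for each `n ∈ O`, then the time-`t′` rows: one
magnitude row for each `n ∈ {0} ∪ M`, and one reactive-power row and one
active-power row for each `n ∈ C ∪ M`. -/
abbrev RowD {N : ℕ} (M O C : Finset (Fin (N + 1))) :=
  ({x // x ∈ O}) ⊕
    (({x // x ∈ insert (0 : Fin (N + 1)) M}) ⊕ (({x // x ∈ C ∪ M}) ⊕ ({x // x ∈ C ∪ M})))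

/-- The pattern `S_B`: the top-block rows restricted to the time-`t′` columns.
Only the coupled active-power rows (for `O`) may be nonzero there. -/
def AllowedB {N : ℕ} (T : SimpleGraph (Fin (N + 1))) (M O C : Finset (Fin (N + 1))) :
    RowA M O C → JCol N → Prop
  | Sum.inl _ => fun _ => False
  | Sum.inr (Sum.inl _) => fun _ => False
  | Sum.inr (Sum.inr (Sum.inl _)) => fun _ => False
  | Sum.inr (Sum.inr (Sum.inr n)) => AllowedPow T n.val

/-- The pattern `S_C`: the bottom-block rows restricted to the time-`t`
columns.  Only the coupled reactive-power rows (for `O`) may be nonzero. -/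
def AllowedC {N : ℕ} (T : SimpleGraph (Fin (N + 1))) (M O C : Finset (Fin (N + 1))) :
    RowD M O C → JCol N → Prop
  | Sum.inl n => AllowedPow T n.val
  | Sum.inr _ => fun _ => False

/-- The pattern `S_D`: the bottom-block rows restricted to the time-`t′`
columns. -/
def AllowedD {N : ℕ} (T : SimpleGraph (Fin (N + 1))) (M O C : Finset (Fin (N + 1))) :
    RowD M O C → JCol N → Prop
  | Sum.inl n => AllowedPow T n.val
  | Sum.inr (Sum.inl n) => AllowedMag n.val
  | Sum.inr (Sum.inr (Sum.inl n)) => AllowedPow T n.val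
  | Sum.inr (Sum.inr (Sum.inr n)) => AllowedPow T n.val

namespace List

variable {V : Type*} [DecidableEq V] {R : V → V → Prop} {l : List V} {x : V}

theorem rel_formPerm_apply_of_ne_getLast (hl : l.Nodup) (hc : l.IsChain R) (hx : x ∈ l)
    (hlast : x ≠ l.getLast (ne_nil_of_mem hx)) : R x (l.formPerm x) := by
  obtain ⟨i, hi, rfl⟩ := mem_iff_getElem.1 hx
  have hi' : i + 1 < l.length := by
    by_contra! h
    exact hlast (by simp only [getLast_eq_getElem]; congr 1; omega)
  rw [formPerm_apply_lt_getElem l hl i hi']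
  exact hc.getElem i hi'

theorem formPerm_apply_ne_of_ne_getLast {s : V} (hs : l.head? = some s) (hx : x ∈ l)
    (hlast : x ≠ l.getLast (ne_nil_of_mem hx)) : l.formPerm x ≠ s := by
  obtain ⟨tl, rfl⟩ := head?_eq_some_iff.1 hs
  exact mt (formPerm_eq_head_iff_eq_getLast tl x s).1 hlast

end List

structure IsLinkage {V : Type*} (R : V → V → Prop) (S D : Finset V) (P : V → List V) : Prop where
  nodup : ∀ s ∈ S, (P s).Nodup
  isChain : ∀ s ∈ S, (P s).IsChain R
  head? : ∀ s ∈ S, (P s).head? = some s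
  getLast?_mem : ∀ s ∈ S, ∃ d ∈ D, (P s).getLast? = some d
  disjoint : ∀ s ∈ S, ∀ t ∈ S, s ≠ t → ∀ v ∈ P s, v ∉ P t

namespace IsLinkage

variable {V : Type*} {R : V → V → Prop} {S D : Finset V} {P : V → List V}

theorem eq_of_mem_of_mem (hP : IsLinkage R S D P) {s t v : V} (hs : s ∈ S) (ht : t ∈ S)
    (hvs : v ∈ P s) (hvt : v ∈ P t) : s = t :=
  by_contra fun hst => hP.disjoint s hs t ht hst v hvs hvt

theorem ne_getLast (hP : IsLinkage R S D P) {s v : V} (hs : s ∈ S) (hv : v ∈ P s) (hvD : v ∉ D) :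
    v ≠ (P s).getLast (List.ne_nil_of_mem hv) := by
  obtain ⟨d, hd, hlast⟩ := hP.getLast?_mem s hs
  rw [List.getLast?_eq_some_getLast (List.ne_nil_of_mem hv), Option.some_inj] at hlast
  exact hlast ▸ fun h => hvD (h ▸ hd)

variable [DecidableEq V]

open Classical in
/-- Cycles every path of the linkage: each vertex but the last moves one step forward, the last
one returns to the source. -/
noncomputable def succ (S : Finset V) (P : V → List V) (v : V) : V :=
  if h : ∃ s ∈ S, v ∈ P s then (P h.choose).formPerm v else v

theorem succ_eq_formPerm (hP : IsLinkage R S D P) {s v : V} (hs : s ∈ S) (hv : v ∈ P s) :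
    succ S P v = (P s).formPerm v := by
  have h : ∃ s ∈ S, v ∈ P s := ⟨s, hs, hv⟩
  rw [succ, dif_pos h, hP.eq_of_mem_of_mem h.choose_spec.1 hs h.choose_spec.2 hv]

theorem succ_eq_self {v : V} (hv : ¬∃ s ∈ S, v ∈ P s) : succ S P v = v := by
  rw [succ, dif_neg hv]

theorem succ_mem (hP : IsLinkage R S D P) {s v : V} (hs : s ∈ S) (hv : v ∈ P s) :
    succ S P v ∈ P s :=
  hP.succ_eq_formPerm hs hv ▸ List.formPerm_apply_mem_of_mem hv

theorem succ_injective (hP : IsLinkage R S D P) : Function.Injective (succ S P) := by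
  intro v w h
  by_cases hv : ∃ s ∈ S, v ∈ P s <;> by_cases hw : ∃ s ∈ S, w ∈ P s
  · obtain ⟨s, hs, hvs⟩ := hv
    obtain ⟨t, ht, hwt⟩ := hw
    obtain rfl := hP.eq_of_mem_of_mem hs ht (h ▸ hP.succ_mem hs hvs) (hP.succ_mem ht hwt)
    rw [hP.succ_eq_formPerm hs hvs, hP.succ_eq_formPerm hs hwt] at h
    exact (P s).formPerm.injective h
  · obtain ⟨s, hs, hvs⟩ := hv
    exact absurd ⟨s, hs, succ_eq_self hw ▸ h ▸ hP.succ_mem hs hvs⟩ hw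
  · obtain ⟨s, hs, hws⟩ := hw
    exact absurd ⟨s, hs, succ_eq_self hv ▸ h.symm ▸ hP.succ_mem hs hws⟩ hv
  · rwa [succ_eq_self hv, succ_eq_self hw] at h

theorem succ_notMem (hP : IsLinkage R S D P) {v : V} (hv : v ∉ D) : succ S P v ∉ S := by
  by_cases hon : ∃ s ∈ S, v ∈ P s
  · obtain ⟨s, hs, hvs⟩ := hon
    intro ht
    have hts : succ S P v = s :=
      (hP.eq_of_mem_of_mem hs ht (hP.succ_mem hs hvs) (List.mem_of_head? (hP.head? _ ht))).symm
    rw [hP.succ_eq_formPerm hs hvs] at hts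
    exact List.formPerm_apply_ne_of_ne_getLast (hP.head? s hs) hvs (hP.ne_getLast hs hvs hv) hts
  · rw [succ_eq_self hon]
    exact fun hvS => hon ⟨v, hvS, List.mem_of_head? (hP.head? v hvS)⟩

theorem rel_succ (hP : IsLinkage R S D P) {v : V} (hv : v ∉ D) (hne : succ S P v ≠ v) :
    R v (succ S P v) ∧ ∃ s ∈ S, v ∈ P s := by
  by_cases hon : ∃ s ∈ S, v ∈ P s
  · obtain ⟨s, hs, hvs⟩ := hon
    rw [hP.succ_eq_formPerm hs hvs]
    exact ⟨List.rel_formPerm_apply_of_ne_getLast (hP.nodup s hs) (hP.isChain s hs) hvs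
      (hP.ne_getLast hs hvs hv), s, hs, hvs⟩
  · exact absurd (succ_eq_self hon) hne

theorem exists_equiv_compl [Fintype V] (hP : IsLinkage R S D P) (hcard : S.card = D.card) :
    ∃ e : {v // v ∉ S} ≃ {v // v ∉ D},
      ∀ v, (e v : V) = v ∨ R (e v) v ∧ ∃ s ∈ S, (e v : V) ∈ P s := by
  let f : {v // v ∉ D} → {v // v ∉ S} := fun v => ⟨succ S P v, hP.succ_notMem v.2⟩
  have hf : f.Bijective := by
    refine (Fintype.bijective_iff_injective_and_card f).2 ⟨fun v w h => ?_, ?_⟩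
    · exact Subtype.ext (hP.succ_injective (congrArg Subtype.val h))
    · simp [Fintype.card_subtype_compl, hcard]
  refine ⟨(Equiv.ofBijective f hf).symm, fun v => ?_⟩
  set w := (Equiv.ofBijective f hf).symm v
  have hw : succ S P w = v := congrArg Subtype.val ((Equiv.ofBijective f hf).apply_symm_apply v)
  by_cases h : succ S P w = w
  · exact Or.inl (h ▸ hw)
  · exact Or.inr (hw ▸ hP.rel_succ w.2 h)

end IsLinkage

theorem Matrix.exists_supported_invertible_of_equiv {α ι κ : Type*} [Fintype ι] [Fintype κ]
    [DecidableEq ι] [DecidableEq κ] [Semiring α] (Allowed : ι → κ → Prop) (e : ι ≃ κ)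
    (he : ∀ i, Allowed i (e i)) :
    ∃ A : Matrix ι κ α, (∀ i j, A i j ≠ 0 → Allowed i j) ∧
      ∃ B : Matrix κ ι α, A * B = 1 ∧ B * A = 1 := by
  refine ⟨(1 : Matrix κ κ α).submatrix e id, fun i j hij => ?_, (1 : Matrix κ κ α).submatrix id e,
    ?_, ?_⟩
  · obtain rfl : e i = j := by_contra fun h => hij (one_apply_ne h)
    exact he i
  · simpa using submatrix_mul_equiv (1 : Matrix κ κ α) 1 e (Equiv.refl κ) e
  · simp [submatrix_mul_equiv (1 : Matrix κ κ α) 1 id e id]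

section CPF

variable {N : ℕ}

/-- The column `r_0` for the substation and `i_n` for every other bus. -/
def magCol : Fin (N + 1) → JCol N :=
  Fin.cases (Sum.inl 0) Sum.inr

theorem colBus_magCol (n : Fin (N + 1)) : colBus (magCol n) = n := by
  cases n using Fin.cases <;> rfl

theorem magCol_injective : Function.Injective (magCol (N := N)) :=
  Function.LeftInverse.injective colBus_magCol

@[simp]
theorem magCol_eq_inl_iff {n m : Fin (N + 1)} : magCol n = Sum.inl m ↔ n = 0 ∧ m = 0 := by
  cases n using Fin.cases <;> simp [magCol, eq_comm]

@[simp]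
theorem inl_eq_magCol_iff {n m : Fin (N + 1)} : Sum.inl m = magCol n ↔ n = 0 ∧ m = 0 := by
  rw [eq_comm, magCol_eq_inl_iff]

/-- The support of the permutation matrix chosen for `J_A`; `g` picks the bus of the `i`-column
of each active-power row. -/
def pivotCol (M O C : Finset (Fin (N + 1))) (g : {x // x ∈ C ∪ M} → Fin (N + 1)) :
    RowA M O C → JCol N
  | Sum.inl n => magCol n
  | Sum.inr (Sum.inl n) => Sum.inl n
  | Sum.inr (Sum.inr (Sum.inl n)) => magCol (g n)
  | Sum.inr (Sum.inr (Sum.inr n)) => Sum.inl n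

theorem allowedA_pivotCol (T : SimpleGraph (Fin (N + 1))) (M O C : Finset (Fin (N + 1)))
    {g : {x // x ∈ C ∪ M} → Fin (N + 1)} (hg : ∀ n : {x // x ∈ C ∪ M}, BusP T n (g n))
    (r : RowA M O C) :
    AllowedA T M O C r (pivotCol M O C g r) := by
  rcases r with n | n | n | n
  · exact colBus_magCol n.1
  · exact Or.inl rfl
  · show BusP T n (colBus (magCol (g n)))
    rw [colBus_magCol]
    exact hg n
  · exact Or.inl rfl

theorem pivotCol_injective {M O C : Finset (Fin (N + 1))} {g : {x // x ∈ C ∪ M} → Fin (N + 1)}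
    (hg : g.Injective) (hgM : ∀ n, g n ∉ M) (hg0 : ∀ n, g n ≠ 0)
    (hMO : Disjoint M O) (hOC : Disjoint O C) (h0 : (0 : Fin (N + 1)) ∉ M ∪ O ∪ C) :
    (pivotCol M O C g).Injective := by
  rintro (⟨a, ha⟩ | ⟨a, ha⟩ | ⟨a, ha⟩ | ⟨a, ha⟩) (⟨b, hb⟩ | ⟨b, hb⟩ | ⟨b, hb⟩ | ⟨b, hb⟩) h <;>
    simp only [pivotCol, magCol_injective.eq_iff, magCol_eq_inl_iff, inl_eq_magCol_iff,
      Sum.inl.injEq] at h <;>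
    grind [Finset.disjoint_left]

theorem card_rowA_eq_card_jCol {M O C : Finset (Fin (N + 1))} (hMO : Disjoint M O)
    (hMC : Disjoint M C) (hOC : Disjoint O C) (hcover : M ∪ O ∪ C = Finset.univ \ {0}) (hcard : M.card = O.card) :
    Fintype.card (RowA M O C) = Fintype.card (JCol N) := by
  have hN : M.card + O.card + C.card = N := by
    have := congrArg Finset.card hcover
    rw [Finset.card_union_of_disjoint (Finset.disjoint_union_left.2 ⟨hMC, hOC⟩),
      Finset.card_union_of_disjoint hMO, Finset.card_sdiff] at this
    simpa using this
  have h0M : (0 : Fin (N + 1)) ∉ M := fun h => by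
    simpa [hcover] using Finset.mem_union_left C (Finset.mem_union_left O h)
  simp only [RowA, JCol, Fintype.card_sum, Fintype.card_coe, Fintype.card_fin,
    Finset.card_insert_of_notMem h0M, Finset.card_union_of_disjoint hMC.symm]
  omega

theorem Criterion1.exists_isLinkage {T : SimpleGraph (Fin (N + 1))} {M O : Finset (Fin (N + 1))}
    (h : Criterion1 T M O) : ∃ P, IsLinkage T.Adj O M P ∧ ∀ o ∈ O, 0 ∉ P o := by
  obtain ⟨P, hP, hdisj⟩ := h
  exact ⟨P, ⟨fun o ho => (hP o ho).1, fun o ho => (hP o ho).2.1, fun o ho => (hP o ho).2.2.2.1,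
    fun o ho => (hP o ho).2.2.2.2, hdisj⟩, fun o ho => (hP o ho).2.2.1⟩

theorem exists_equiv_allowedA (T : SimpleGraph (Fin (N + 1))) (M O C : Finset (Fin (N + 1)))
    (hMO : Disjoint M O) (hMC : Disjoint M C) (hOC : Disjoint O C)
    (hcover : M ∪ O ∪ C = Finset.univ \ {0}) (hcard : M.card = O.card)
    (hcrit : Criterion1 T M O) :
    ∃ σ : RowA M O C ≃ JCol N, ∀ r, AllowedA T M O C r (σ r) := by
  obtain ⟨P, hP, hP0⟩ := hcrit.exists_isLinkage
  obtain ⟨e, he⟩ := hP.exists_equiv_compl hcard.symm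
  have h0 : (0 : Fin (N + 1)) ∉ M ∪ O ∪ C := by simp [hcover]
  have hCMO : ∀ n ∈ C ∪ M, n ∉ O := by
    intro n hn hnO
    rcases Finset.mem_union.1 hn with hC | hM
    exacts [Finset.disjoint_left.1 hOC hnO hC, Finset.disjoint_left.1 hMO hM hnO]
  let g : {x // x ∈ C ∪ M} → Fin (N + 1) := fun n => e ⟨n, hCMO n n.2⟩
  have hg0 : ∀ n, g n ≠ 0 := by
    intro n
    rcases he ⟨n, hCMO n n.2⟩ with h | ⟨-, o, ho, hmem⟩
    · have hn : (n : Fin (N + 1)) ≠ 0 := fun hn => h0 (by grind)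
      exact fun hgn => hn (h.symm.trans hgn)
    · exact fun hn => hP0 o ho (hn ▸ hmem)
  have hinj : (pivotCol M O C g).Injective :=
    pivotCol_injective (fun a b h => Subtype.ext (by simpa using e.injective (Subtype.ext h)))
      (fun n => (e _).2) hg0 hMO hOC h0
  refine ⟨Equiv.ofBijective _ ((Fintype.bijective_iff_injective_and_card _).2
    ⟨hinj, card_rowA_eq_card_jCol hMO hMC hOC hcover hcard⟩), allowedA_pivotCol T M O C fun n => ?_⟩
  exact (he _).imp Eq.symm fun h => h.1.symm

def rowEquiv (M O C : Finset (Fin (N + 1))) : RowA M O C ≃ RowD M O C where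
  toFun
    | Sum.inl n => Sum.inr (Sum.inl n)
    | Sum.inr (Sum.inl n) => Sum.inr (Sum.inr (Sum.inl n))
    | Sum.inr (Sum.inr (Sum.inl n)) => Sum.inr (Sum.inr (Sum.inr n))
    | Sum.inr (Sum.inr (Sum.inr n)) => Sum.inl n
  invFun
    | Sum.inl n => Sum.inr (Sum.inr (Sum.inr n))
    | Sum.inr (Sum.inl n) => Sum.inl n
    | Sum.inr (Sum.inr (Sum.inl n)) => Sum.inr (Sum.inl n)
    | Sum.inr (Sum.inr (Sum.inr n)) => Sum.inr (Sum.inr (Sum.inl n))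
  left_inv := by rintro (n | n | n | n) <;> rfl
  right_inv := by rintro (n | n | n | n) <;> rfl

theorem allowedD_rowEquiv (T : SimpleGraph (Fin (N + 1))) (M O C : Finset (Fin (N + 1)))
    (r : RowA M O C) (c : JCol N) :
    AllowedD T M O C (rowEquiv M O C r) c ↔ AllowedA T M O C r c := by
  rcases r with n | n | n | n <;> rfl

end CPF

theorem stmt12_general {N : ℕ} (T : SimpleGraph (Fin (N + 1)))
    (M O C : Finset (Fin (N + 1)))
    (hMO : Disjoint M O) (hMC : Disjoint M C) (hOC : Disjoint O C)
    (hcover : M ∪ O ∪ C = Finset.univ \ {0})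
    (hcard : M.card = O.card)
    (hcrit : Criterion1 T M O) :
    ∃ (JA : Matrix (RowA M O C) (JCol N) ℝ) (JB : Matrix (RowA M O C) (JCol N) ℝ)
      (JC : Matrix (RowD M O C) (JCol N) ℝ) (JD : Matrix (RowD M O C) (JCol N) ℝ),
      (∀ r c, JA r c ≠ 0 → AllowedA T M O C r c) ∧
      (∀ r c, JB r c ≠ 0 → AllowedB T M O C r c) ∧
      (∀ r c, JC r c ≠ 0 → AllowedC T M O C r c) ∧
      (∀ r c, JD r c ≠ 0 → AllowedD T M O C r c) ∧
      ∃ JAinv : Matrix (JCol N) (RowA M O C) ℝ,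
        JA * JAinv = 1 ∧ JAinv * JA = 1 ∧
        ∃ Z : Matrix (JCol N) (RowD M O C) ℝ,
          (JD - JC * JAinv * JB) * Z = 1 ∧ Z * (JD - JC * JAinv * JB) = 1 := by
  obtain ⟨σ, hσ⟩ := exists_equiv_allowedA T M O C hMO hMC hOC hcover hcard hcrit
  obtain ⟨JA, hJA, JAinv, hA₁, hA₂⟩ :=
    Matrix.exists_supported_invertible_of_equiv (α := ℝ) (AllowedA T M O C) σ hσ
  obtain ⟨JD, hJD, Z, hD₁, hD₂⟩ := Matrix.exists_supported_invertible_of_equiv (α := ℝ)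
    (AllowedD T M O C) ((rowEquiv M O C).symm.trans σ) fun r => by
      simpa using (allowedD_rowEquiv T M O C _ _).2 (hσ ((rowEquiv M O C).symm r))
  refine ⟨JA, 0, 0, JD, hJA, fun _ _ h => absurd rfl h, fun _ _ h => absurd rfl h, hJD, JAinv,
    hA₁, hA₂, Z, ?_, ?_⟩ <;> simpa

/-- **Lemma 5 of the paper.**  Under Criterion 1, there exist real matrices
`A, B, C, D` conforming to the blocks `S_A, S_B, S_C, S_D` of the CPF sparsity
pattern such that `A` is invertible and the Schur complement `D - C·A⁻¹·B` is
invertible. -/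
theorem stmt12 {N : ℕ} (T : SimpleGraph (Fin (N + 1))) (hT : T.IsTree)
    (hleaf : ∃! v, T.Adj 0 v)
    (M O C : Finset (Fin (N + 1)))
    (hMO : Disjoint M O) (hMC : Disjoint M C) (hOC : Disjoint O C)
    (hcover : M ∪ O ∪ C = Finset.univ \ {0})
    (hcard : M.card = O.card)
    (hcrit : Criterion1 T M O) :
    ∃ (JA : Matrix (RowA M O C) (JCol N) ℝ) (JB : Matrix (RowA M O C) (JCol N) ℝ)
      (JC : Matrix (RowD M O C) (JCol N) ℝ) (JD : Matrix (RowD M O C) (JCol N) ℝ),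
      (∀ r c, JA r c ≠ 0 → AllowedA T M O C r c) ∧
      (∀ r c, JB r c ≠ 0 → AllowedB T M O C r c) ∧
      (∀ r c, JC r c ≠ 0 → AllowedC T M O C r c) ∧
      (∀ r c, JD r c ≠ 0 → AllowedD T M O C r c) ∧
      ∃ JAinv : Matrix (JCol N) (RowA M O C) ℝ,
        JA * JAinv = 1 ∧ JAinv * JA = 1 ∧
        ∃ Z : Matrix (JCol N) (RowD M O C) ℝ,
          (JD - JC * JAinv * JB) * Z = 1 ∧ Z * (JD - JC * JAinv * JB) = 1 :=
  stmt12_general T M O C hMO hMC hOC hcover hcard hcrit
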